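/- In the ring of formal power series in the variable x with coefficients in the field ℚ(q) of rational functions, Σ_{n≥0} Cat_{B_n}(q) · x^n · q^{−n(n−1)} · (1 − qx) / Π_{j=0}^{2n} (1 + x q^{−j}) = 1, where Cat_{B_n}(q) = Σ_w q^{area(w)} is the area generating polynomial over all Dyck paths w of type B_n (with Cat_{B_0}(q) = 1). -/

import Mathlib

open scoped Classical

namespace Stmt

/-- Number of north steps (`true`) among the first `k` steps of the path `w`. -/
def countN {m : ℕ} (w : Fin m → Bool) (k : ℕ) : ℕ :=
  (Finset.univ.filter (fun t : Fin m => (t : ℕ) < k ∧ w t = true)).card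

/-- Number of east steps (`false`) among the first `k` steps of the path `w`. -/
def countE {m : ℕ} (w : Fin m → Bool) (k : ℕ) : ℕ :=
  (Finset.univ.filter (fun t : Fin m => (t : ℕ) < k ∧ w t = false)).card

/-- A Dyck path of length `n`: `n` north and `n` east steps, every prefix has
at least as many north as east steps. -/
def IsDyckA (n : ℕ) (w : Fin (2 * n) → Bool) : Prop :=
  countN w (2 * n) = n ∧ ∀ k : ℕ, countE w k ≤ countN w k

/-- A Dyck path of type `B_n`: `2n` steps, every prefix has at least as many
north as east steps. -/
def IsDyckB (n : ℕ) (w : Fin (2 * n) → Bool) : Prop :=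
  ∀ k : ℕ, countE w k ≤ countN w k

/-- The unit cell `[i-1,i] × [j-1,j]` lies below the lattice path `w`:
at some time the path has `x`-coordinate `< i` and `y`-coordinate `≥ j`. -/
def CellBelow {m : ℕ} (w : Fin m → Bool) (i j : ℕ) : Prop :=
  ∃ k : ℕ, countE w k < i ∧ j ≤ countN w k

/-- Area of a (type `A`) Dyck path: number of cells `b_{i,j}` with `i < j`
lying below the path. -/
noncomputable def areaA {m : ℕ} (w : Fin m → Bool) : ℕ :=
  {p : ℕ × ℕ | 1 ≤ p.1 ∧ p.1 < p.2 ∧ CellBelow w p.1 p.2}.ncard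

/-- Area of a type `B_n` Dyck path: number of cells `b_{i,j}` with
`1 ≤ i < j ≤ 2n+1-i` lying below the path. -/
noncomputable def areaB (n : ℕ) (w : Fin (2 * n) → Bool) : ℕ :=
  {p : ℕ × ℕ | 1 ≤ p.1 ∧ p.1 < p.2 ∧ p.2 ≤ 2 * n + 1 - p.1 ∧
    CellBelow w p.1 p.2}.ncard

/-- Descent set of a path, 1-indexed: positions `i` with `w_i = E`, `w_{i+1} = N`. -/
def pathDes {m : ℕ} (w : Fin m → Bool) : Finset ℕ :=
  (Finset.Ioo 0 m).filter (fun i =>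
    ∃ h : i < m, w ⟨i - 1, Nat.lt_of_le_of_lt (Nat.sub_le i 1) h⟩ = false ∧ w ⟨i, h⟩ = true)

def desPath {m : ℕ} (w : Fin m → Bool) : ℕ := (pathDes w).card

/-- Major index of a Dyck path of length `n`: `maj(w) = ∑_{i ∈ Des(w)} (2n - i)`. -/
def majA (n : ℕ) (w : Fin (2 * n) → Bool) : ℕ :=
  ∑ i ∈ pathDes w, (2 * n - i)

/-- Number of east steps of a path. -/
def negPath {m : ℕ} (w : Fin m → Bool) : ℕ :=
  (Finset.univ.filter (fun t : Fin m => w t = false)).card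

/-- Type `B` major index: `maj(w) = 2 ⬝ (neg(w) + ∑_{i ∈ Des(w)} (2n - i))`. -/
def majB (n : ℕ) (w : Fin (2 * n) → Bool) : ℕ :=
  2 * (negPath w + ∑ i ∈ pathDes w, (2 * n - i))

/-- Area generating polynomial of type `B_n` Dyck paths, as an element of the
field `ℚ(q)` of rational functions. -/
noncomputable def CatBq (n : ℕ) : RatFunc ℚ :=
  ∑ w ∈ Finset.univ.filter (fun w : Fin (2 * n) → Bool => IsDyckB n w),
    RatFunc.X ^ areaB n w

/-- The `n`-th summand
`Cat_{B_n}(q) ⬝ x^n ⬝ q^{-n(n-1)} ⬝ (1 - qx) / ∏_{j=0}^{2n} (1 + x q^{-j})`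
of the generating function identity, as a formal power series in `x` over `ℚ(q)`. -/
noncomputable def termB (n : ℕ) : PowerSeries (RatFunc ℚ) :=
  PowerSeries.C (R := RatFunc ℚ) (CatBq n * (RatFunc.X ^ (n * (n - 1)))⁻¹) *
    PowerSeries.X ^ n *
    (1 - PowerSeries.C (R := RatFunc ℚ) RatFunc.X * PowerSeries.X) *
    (∏ j ∈ Finset.range (2 * n + 1),
        (1 + PowerSeries.C (R := RatFunc ℚ) ((RatFunc.X ^ j)⁻¹) * PowerSeries.X))⁻¹

/-! Encode a path by its east steps and weigh it by `eastWeight w = ∑_{east steps t} (2n - t)`.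
Counting column by column, `area(w) + eastWeight w = n²` for every type `B_n` Dyck path, so
`Cat_{B_n}(q) = q^{n²} V(2n, n)`, where `V(K, m) = ∑ q^{-eastWeight w}` runs over the `K`-step paths
all of whose prefixes satisfy `#E + K ≤ #N + 2m`. Splitting off the first step gives
`V(K+1, m) = [K+1 ≤ 2m] V(K, m) + [K+2 ≤ 2m] q^{-(K+1)} V(K, m-1)`, i.e. multiplying the tail
`T(K, m₀) = ∑_{m ≥ m₀} q^m V(K, m) x^m` by `1 + q^{-K} x` gives `T(K+1, m₀+1)` up to the single
monomial `q^{m₀} V(K, m₀) x^{m₀}`. Two such steps per summand telescope to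
`(1 - ∑_{n<N} term_n) · (-x; q⁻¹)_{2N} = (1 - qx) · T(2N, N)`, and `x^N` divides the right side. -/

open Finset

section Counting

variable {m : ℕ} (w : Fin m → Bool)

lemma card_filter_lt_succ_and (p : Fin m → Prop) [DecidablePred p] (t : Fin m) :
    #{s : Fin m | (s : ℕ) < t + 1 ∧ p s} =
      #{s : Fin m | (s : ℕ) < t ∧ p s} + if p t then 1 else 0 := by
  have hind (s : Fin m) : (if (s : ℕ) < t + 1 ∧ p s then 1 else 0) =
      (if (s : ℕ) < t ∧ p s then 1 else 0) + if s = t then (if p t then 1 else 0) else 0 := by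
    rcases lt_trichotomy (s : ℕ) t with h | h | h
    · simp [h, Fin.ne_of_lt h, Nat.lt_succ_of_lt h]
    · obtain rfl := Fin.ext h
      simp
    · simp [(Fin.ne_of_lt h).symm, h.not_gt, show ¬ (s : ℕ) < t + 1 by omega]
  simp only [card_filter, sum_congr rfl fun s _ => hind s, sum_add_distrib, sum_ite_eq',
    mem_univ, if_true]

lemma countE_add_countN (k : ℕ) : countE w k + countN w k = min m k := by
  rw [countE, countN, ← card_union_of_disjoint, ← Fin.card_filter_val_lt, ← filter_or]
  · congr 1
    ext t
    cases h : w t <;> simp [h]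
  · exact disjoint_filter.2 fun t _ h h' => by simp [h.2] at h'

lemma countE_zero : countE w 0 = 0 := by simp [countE]

lemma countN_zero : countN w 0 = 0 := by simp [countN]

lemma countE_mono : Monotone (countE w) := fun _ _ h =>
  card_le_card <| monotone_filter_right _ fun _ _ ht => ⟨ht.1.trans_le h, ht.2⟩

lemma countN_mono : Monotone (countN w) := fun _ _ h =>
  card_le_card <| monotone_filter_right _ fun _ _ ht => ⟨ht.1.trans_le h, ht.2⟩

lemma countE_le (k : ℕ) : countE w k ≤ countE w m :=
  card_le_card <| monotone_filter_right _ fun t _ ht => ⟨t.isLt, ht.2⟩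

lemma countN_le (k : ℕ) : countN w k ≤ countN w m :=
  card_le_card <| monotone_filter_right _ fun t _ ht => ⟨t.isLt, ht.2⟩

lemma countE_succ (t : Fin m) : countE w (t + 1) = countE w t + if w t = false then 1 else 0 :=
  card_filter_lt_succ_and _ t

lemma countE_succ_of_east {t : Fin m} (ht : w t = false) : countE w (t + 1) = countE w t + 1 := by
  simp [countE_succ, ht]

lemma countN_succ_of_east {t : Fin m} (ht : w t = false) : countN w (t + 1) = countN w t := by
  have := countE_add_countN w t
  have := countE_add_countN w (t + 1)
  have := countE_succ_of_east w ht
  omega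

lemma countE_lt_of_east {s t : Fin m} (hs : w s = false) (hst : s < t) :
    countE w s < countE w t := by
  have := countE_mono w (show (s : ℕ) + 1 ≤ t from hst)
  rw [countE_succ_of_east w hs] at this
  omega

lemma exists_east_countE_eq {c : ℕ} (hc : c < countE w m) :
    ∃ t, w t = false ∧ countE w t = c := by
  suffices ∀ k, c < countE w k → ∃ t, w t = false ∧ countE w t = c from this m hc
  intro k
  induction k with
  | zero => simp [countE_zero]
  | succ k ih =>
    intro hck
    by_cases hk : c < countE w k
    · exact ih hk
    have hkm : k < m := by
      by_contra! hkm
      have := countE_le w (k + 1)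
      have := countE_mono w hkm
      omega
    have hsucc : countE w (k + 1) = countE w k + if w ⟨k, hkm⟩ = false then 1 else 0 :=
      countE_succ w ⟨k, hkm⟩
    have hE : w ⟨k, hkm⟩ = false := by
      by_contra hN
      simp only [hN, if_false] at hsucc
      omega
    simp only [hE, if_true] at hsucc
    exact ⟨⟨k, hkm⟩, hE, show countE w k = c by omega⟩

/-- `t ↦ countE w t` is a bijection from the east steps onto `range (countE w m)`. -/
lemma sum_east_comp_countE {M : Type*} [AddCommMonoid M] (f : ℕ → M) :
    ∑ t ∈ {t | w t = false}, f (countE w t) = ∑ c ∈ range (countE w m), f c := by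
  refine sum_nbij (fun t => countE w t) (fun t ht => ?_) (fun s hs t ht hst => ?_)
    (fun c hc => ?_) fun _ _ => rfl
  · have := countE_le w (t + 1)
    rw [countE_succ_of_east w (mem_filter.1 ht).2] at this
    exact mem_range.2 (by omega)
  · simp only [coe_filter, mem_univ, true_and, Set.mem_ofPred_eq] at hs ht
    by_contra hne
    rcases lt_or_gt_of_ne hne with h | h
    · exact (countE_lt_of_east w hs h).ne hst
    · exact (countE_lt_of_east w ht h).ne' hst
  · obtain ⟨t, ht, rfl⟩ := exists_east_countE_eq w (mem_range.1 hc)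
    exact ⟨t, by simpa using ht, rfl⟩

end Counting

section Area

def eastWeight {K : ℕ} (w : Fin K → Bool) : ℕ := ∑ t ∈ {t | w t = false}, (K - t)

lemma cellBelow_iff_of_east {m : ℕ} (w : Fin m → Bool) {t : Fin m} (ht : w t = false) (j : ℕ) :
    CellBelow w (countE w t + 1) j ↔ j ≤ countN w t := by
  refine ⟨fun ⟨k, hk, hj⟩ => hj.trans (countN_mono w ?_), fun hj => ⟨t, by omega, hj⟩⟩
  by_contra! htk
  have := countE_mono w (show (t : ℕ) + 1 ≤ k by omega)
  rw [countE_succ_of_east w ht] at this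
  omega

lemma cellBelow_iff_of_le {m : ℕ} (w : Fin m → Bool) {c : ℕ} (hc : countE w m ≤ c) (j : ℕ) :
    CellBelow w (c + 1) j ↔ j ≤ countN w m :=
  ⟨fun ⟨k, _, hj⟩ => hj.trans (countN_le w k), fun hj => ⟨m, by omega, hj⟩⟩

lemma card_filter_Ioc_le (a b h : ℕ) : #{j ∈ Ioc a b | j ≤ h} = min h b - a := by
  rw [← Nat.card_Ioc]
  congr 1
  ext j
  simp only [mem_filter, mem_Ioc]
  omega

lemma sum_range_staircase (n : ℕ) : ∑ c ∈ range (2 * n), (2 * n - 1 - 2 * c) = n ^ 2 := by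
  induction n with
  | zero => simp
  | succ n ih =>
    rw [show 2 * (n + 1) = 2 * n + 1 + 1 by ring, sum_range_succ', sum_range_succ,
      sum_congr rfl fun c _ => show 2 * n + 1 + 1 - 1 - 2 * (c + 1) = 2 * n - 1 - 2 * c by omega,
      ih, show (n + 1) ^ 2 = n ^ 2 + (2 * n + 1) by ring]
    omega

variable {n : ℕ} (w : Fin (2 * n) → Bool)

lemma areaB_eq_sum_columns :
    areaB n w = ∑ c ∈ range (2 * n), #{j ∈ Ioc (c + 1) (2 * n - c) | CellBelow w (c + 1) j} := by
  have hS : {p : ℕ × ℕ | 1 ≤ p.1 ∧ p.1 < p.2 ∧ p.2 ≤ 2 * n + 1 - p.1 ∧ CellBelow w p.1 p.2} =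
      ↑{p ∈ Ico 1 (2 * n + 1) ×ˢ Ico 1 (2 * n + 1) |
        p.1 < p.2 ∧ p.2 ≤ 2 * n + 1 - p.1 ∧ CellBelow w p.1 p.2} := by
    ext ⟨i, j⟩
    simp only [Set.mem_ofPred_eq, coe_filter, mem_product, mem_Ico]
    constructor
    · rintro ⟨h1, h2, h3, h4⟩
      exact ⟨⟨⟨h1, by omega⟩, by omega, by omega⟩, h2, h3, h4⟩
    · rintro ⟨⟨⟨h1, -⟩, -⟩, h2, h3, h4⟩
      exact ⟨h1, h2, h3, h4⟩
  rw [areaB, hS, Set.ncard_coe_finset, card_filter, sum_product, sum_Ico_eq_sum_range,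
    Nat.add_sub_cancel]
  refine sum_congr rfl fun c _ => ?_
  rw [← card_filter, add_comm 1 c]
  congr 1
  ext j
  by_cases hj : CellBelow w (c + 1) j
  · simp only [mem_filter, mem_Ico, mem_Ioc, hj, and_true]
    omega
  · simp only [mem_filter, hj, and_false]

theorem areaB_add_eastWeight (hw : IsDyckB n w) : areaB n w + eastWeight w = n ^ 2 := by
  set col := fun c => #{j ∈ Ioc (c + 1) (2 * n - c) | CellBelow w (c + 1) j}
  have he : countE w (2 * n) ≤ 2 * n := by
    have := countE_add_countN w (2 * n)
    omega
  -- Column `c + 1` of the region has `2n - 1 - 2c` cells; in the column of an east step `t`,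
  -- exactly `2n - t` of them lie above the path.
  have col_east (t) (ht : t ∈ ({t | w t = false} : Finset (Fin (2 * n)))) :
      col (countE w t) + (2 * n - t) = 2 * n - 1 - 2 * countE w t := by
    replace ht := (mem_filter.1 ht).2
    have hdyck := hw (t + 1)
    have hsum := countE_add_countN w t
    rw [countE_succ_of_east w ht, countN_succ_of_east w ht] at hdyck
    simp only [col]
    rw [filter_congr fun j _ => cellBelow_iff_of_east w ht j, card_filter_Ioc_le]
    omega
  have col_late (c) (hc : c ∈ Ico (countE w (2 * n)) (2 * n)) : col c = 2 * n - 1 - 2 * c := by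
    have := countE_add_countN w (2 * n)
    rw [mem_Ico] at hc
    simp only [col]
    rw [filter_congr fun j _ => cellBelow_iff_of_le w hc.1 j, card_filter_Ioc_le]
    omega
  calc areaB n w + eastWeight w
      = ∑ c ∈ range (2 * n), col c + ∑ t ∈ {t | w t = false}, (2 * n - t) := by
        rw [areaB_eq_sum_columns]
        rfl
    _ = ∑ t ∈ {t | w t = false}, (col (countE w t) + (2 * n - t)) +
          ∑ c ∈ Ico (countE w (2 * n)) (2 * n), col c := by
        rw [← sum_range_add_sum_Ico _ he, ← sum_east_comp_countE, sum_add_distrib]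
        ring
    _ = ∑ c ∈ range (2 * n), (2 * n - 1 - 2 * c) := by
        rw [sum_congr rfl col_east, sum_congr rfl col_late,
          sum_east_comp_countE w (fun c => 2 * n - 1 - 2 * c), sum_range_add_sum_Ico _ he]
    _ = n ^ 2 := sum_range_staircase n

end Area

section Ballot

def IsBallot (K m : ℕ) (w : Fin K → Bool) : Prop :=
  ∀ k, countE w k + K ≤ countN w k + 2 * m

lemma isDyckB_iff_isBallot {n : ℕ} (w : Fin (2 * n) → Bool) :
    IsDyckB n w ↔ IsBallot (2 * n) n w :=
  forall_congr' fun _ => by omega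

noncomputable def ballotPoly (K m : ℕ) : RatFunc ℚ :=
  ∑ w ∈ {w : Fin K → Bool | IsBallot K m w}, (RatFunc.X ^ eastWeight w)⁻¹

variable {K m : ℕ} (b : Bool) (w : Fin K → Bool)

lemma countE_cons_succ (k : ℕ) :
    countE (Fin.cons b w : Fin (K + 1) → Bool) (k + 1) =
      countE w k + if b = false then 1 else 0 := by
  simp [countE, Fin.card_filter_univ_succ', add_comm]

lemma countN_cons_succ (k : ℕ) :
    countN (Fin.cons b w : Fin (K + 1) → Bool) (k + 1) =
      countN w k + if b = true then 1 else 0 := by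
  simp [countN, Fin.card_filter_univ_succ', add_comm]

lemma eastWeight_cons :
    eastWeight (Fin.cons b w : Fin (K + 1) → Bool) =
      (if b = false then K + 1 else 0) + eastWeight w := by
  simp [eastWeight, sum_filter, Fin.sum_univ_succ]

lemma isBallot_cons_true :
    IsBallot (K + 1) m (Fin.cons true w) ↔ K + 1 ≤ 2 * m ∧ IsBallot K m w := by
  have step (k : ℕ) : countE (Fin.cons true w : Fin (K + 1) → Bool) (k + 1) = countE w k ∧
      countN (Fin.cons true w : Fin (K + 1) → Bool) (k + 1) = countN w k + 1 := by
    simp [countE_cons_succ, countN_cons_succ]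
  refine ⟨fun h => ⟨?_, fun k => ?_⟩, fun ⟨hm, h⟩ k => ?_⟩
  · simpa [countE_zero, countN_zero] using h 0
  · have := h (k + 1)
    rw [(step k).1, (step k).2] at this
    omega
  · rcases k with _ | k
    · rw [countE_zero, countN_zero]
      omega
    · have := h k
      rw [(step k).1, (step k).2]
      omega

lemma isBallot_cons_false :
    IsBallot (K + 1) m (Fin.cons false w) ↔ K + 2 ≤ 2 * m ∧ IsBallot K (m - 1) w := by
  have step (k : ℕ) : countE (Fin.cons false w : Fin (K + 1) → Bool) (k + 1) = countE w k + 1 ∧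
      countN (Fin.cons false w : Fin (K + 1) → Bool) (k + 1) = countN w k := by
    simp [countE_cons_succ, countN_cons_succ]
  refine ⟨fun h => ?_, fun ⟨hm, h⟩ k => ?_⟩
  · have h₁ := h 1
    rw [(step 0).1, (step 0).2, countE_zero, countN_zero] at h₁
    refine ⟨by omega, fun k => ?_⟩
    have := h (k + 1)
    rw [(step k).1, (step k).2] at this
    omega
  · rcases k with _ | k
    · rw [countE_zero, countN_zero]
      omega
    · have := h k
      rw [(step k).1, (step k).2]
      omega

lemma ballotPoly_zero (m : ℕ) : ballotPoly 0 m = 1 := by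
  simp [ballotPoly, IsBallot, eastWeight, countE, countN]

lemma ballotPoly_succ (K m : ℕ) :
    ballotPoly (K + 1) m = (if K + 1 ≤ 2 * m then ballotPoly K m else 0) +
      if K + 2 ≤ 2 * m then (RatFunc.X ^ (K + 1))⁻¹ * ballotPoly K (m - 1) else 0 := by
  rw [ballotPoly, sum_filter, ← (Fin.consEquiv fun _ => Bool).sum_comp, Fintype.sum_prod_type,
    Fintype.sum_bool]
  congr 1 <;> split_ifs with h <;>
    simp [Fin.consEquiv, isBallot_cons_true, isBallot_cons_false, eastWeight_cons, h, ballotPoly,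
      sum_filter, mul_sum, ← mul_inv, ← pow_add]

theorem catBq_eq (n : ℕ) : CatBq n = RatFunc.X ^ (n ^ 2) * ballotPoly (2 * n) n := by
  rw [CatBq, ballotPoly, mul_sum]
  refine sum_congr (by simp [isDyckB_iff_isBallot]) fun w hw => ?_
  rw [← areaB_add_eastWeight w ((isDyckB_iff_isBallot w).2 (mem_filter.1 hw).2), pow_add,
    mul_inv_cancel_right₀ (pow_ne_zero _ RatFunc.X_ne_zero)]

end Ballot

section Series

open PowerSeries

noncomputable def ballotTail (K m₀ : ℕ) : PowerSeries (RatFunc ℚ) :=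
  mk fun m => if m₀ ≤ m then RatFunc.X ^ m * ballotPoly K m else 0

/-- The `q`-shifted factorial `(-x; q⁻¹)_K`. -/
noncomputable def qPoch (K : ℕ) : PowerSeries (RatFunc ℚ) :=
  ∏ j ∈ range K, (1 + C (RatFunc.X ^ j)⁻¹ * X)

lemma ballotTail_eq_add (K m₀ : ℕ) :
    ballotTail K m₀ = ballotTail K (m₀ + 1) + C (RatFunc.X ^ m₀ * ballotPoly K m₀) * X ^ m₀ := by
  ext m
  simp only [ballotTail, map_add, coeff_mk, coeff_C_mul_X_pow]
  split_ifs <;> first | omega | simp_all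

lemma ballotTail_mul {K m₀ : ℕ} (h : K ≤ 2 * m₀) :
    ballotTail K m₀ * (1 + C (RatFunc.X ^ K)⁻¹ * X) =
      ballotTail (K + 1) (m₀ + 1) + C (RatFunc.X ^ m₀ * ballotPoly K m₀) * X ^ m₀ := by
  rw [mul_add, mul_one, mul_left_comm, ← mul_assoc]
  ext (_ | m)
  · simp only [ballotTail, map_add, coeff_mk, coeff_C_mul_X_pow, coeff_zero_mul_X]
    split_ifs <;> first | omega | simp_all
  · simp only [ballotTail, map_add, coeff_mk, coeff_C_mul, coeff_X_pow, coeff_succ_mul_X,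
      ballotPoly_succ K (m + 1), Nat.add_sub_cancel]
    rcases lt_trichotomy m₀ (m + 1) with hm | rfl | hm
    · have hK : K + 1 ≤ 2 * (m + 1) ∧ K + 2 ≤ 2 * (m + 1) := by omega
      rw [if_pos hm.le, if_pos (Nat.le_of_lt_succ hm), if_pos (Nat.succ_le_succ_iff.2
        (Nat.le_of_lt_succ hm)), if_pos hK.1, if_pos hK.2, if_neg hm.ne']
      field_simp [RatFunc.X_ne_zero]
      ring
    · simp
    · simp [hm.not_ge, hm.ne, show ¬ m₀ ≤ m by omega]

lemma X_pow_dvd_ballotTail (K m₀ : ℕ) : X ^ m₀ ∣ ballotTail K m₀ :=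
  X_pow_dvd_iff.2 fun m hm => by simp [ballotTail, hm.not_ge]

lemma one_sub_mul_ballotTail_zero : (1 - C RatFunc.X * X) * ballotTail 0 0 = 1 := by
  have : ballotTail 0 0 = rescale RatFunc.X (mk 1) := by
    simp [ballotTail, ballotPoly_zero, rescale_mk]
  rw [this, ← rescale_X, ← map_one (rescale _), ← map_sub, ← map_mul, mul_comm,
    mk_one_mul_one_sub_eq_one, map_one]

lemma qPoch_succ (K : ℕ) : qPoch (K + 1) = qPoch K * (1 + C (RatFunc.X ^ K)⁻¹ * X) :=
  prod_range_succ _ _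

lemma isUnit_qPoch (K : ℕ) : IsUnit (qPoch K) := by
  simp [isUnit_iff_constantCoeff, qPoch]

lemma catBq_mul_inv_pow (n : ℕ) :
    CatBq n * (RatFunc.X ^ (n * (n - 1)))⁻¹ = RatFunc.X ^ n * ballotPoly (2 * n) n := by
  have : n ^ 2 = n * (n - 1) + n := by cases n <;> simp [sq, Nat.mul_succ]
  rw [catBq_eq, this, pow_add]
  field_simp [RatFunc.X_ne_zero]

lemma termB_mul_qPoch (n : ℕ) :
    termB n * qPoch (2 * n + 1) =
      C (RatFunc.X ^ n * ballotPoly (2 * n) n) * X ^ n * (1 - C RatFunc.X * X) := by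
  rw [termB, ← catBq_mul_inv_pow, ← qPoch, mul_assoc, PowerSeries.inv_mul_cancel _
    (isUnit_iff_constantCoeff.1 (isUnit_qPoch _)).ne_zero, mul_one]

theorem one_sub_sum_termB_mul_qPoch (N : ℕ) :
    (1 - ∑ n ∈ range N, termB n) * qPoch (2 * N) =
      (1 - C RatFunc.X * X) * ballotTail (2 * N) N := by
  induction N with
  | zero => simp [qPoch, one_sub_mul_ballotTail_zero]
  | succ N ih =>
    have hterm := termB_mul_qPoch N
    rw [qPoch_succ] at hterm
    have h₁ := ballotTail_mul (le_refl (2 * N))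
    have h₂ : ballotTail (2 * N + 1) (N + 1) * (1 + C (RatFunc.X ^ (2 * N + 1))⁻¹ * X) =
        ballotTail (2 * N + 2) (N + 2) +
          C (RatFunc.X ^ (N + 1) * ballotPoly (2 * N + 1) (N + 1)) * X ^ (N + 1) :=
      ballotTail_mul (by omega)
    have h₃ : ballotTail (2 * N + 2) (N + 1) = ballotTail (2 * N + 2) (N + 2) +
        C (RatFunc.X ^ (N + 1) * ballotPoly (2 * N + 1) (N + 1)) * X ^ (N + 1) := by
      rw [ballotTail_eq_add, ballotPoly_succ, if_pos (by omega), if_neg (by omega), add_zero]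
    rw [sum_range_succ, show 2 * (N + 1) = 2 * N + 1 + 1 by ring, qPoch_succ, qPoch_succ]
    linear_combination
      (1 + C (RatFunc.X ^ (2 * N))⁻¹ * X) * (1 + C (RatFunc.X ^ (2 * N + 1))⁻¹ * X) * ih -
      (1 + C (RatFunc.X ^ (2 * N + 1))⁻¹ * X) * hterm +
      (1 - C RatFunc.X * X) * (1 + C (RatFunc.X ^ (2 * N + 1))⁻¹ * X) * h₁ +
      (1 - C RatFunc.X * X) * (h₂ - h₃)

end Series

/-- `∑_{n ≥ 0} Cat_{B_n}(q) x^n q^{-n(n-1)} (1 - qx) / (-x; q^{-1})_{2n+1} = 1`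
in `ℚ(q)[[x]]`: every coefficient of the partial sums stabilizes at the
corresponding coefficient of `1` (the `n`-th summand is divisible by `x^n`). -/
theorem catB_generating_function (d N : ℕ) (hdN : d ≤ N) :
    PowerSeries.coeff (R := RatFunc ℚ) d (∑ n ∈ Finset.range (N + 1), termB n) =
      if d = 0 then 1 else 0 := by
  have hdvd : PowerSeries.X ^ (N + 1) ∣ 1 - ∑ n ∈ range (N + 1), termB n := by
    rw [← (isUnit_qPoch (2 * (N + 1))).dvd_mul_right, one_sub_sum_termB_mul_qPoch]
    exact dvd_mul_of_dvd_right (X_pow_dvd_ballotTail _ _) _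
  have hcoeff := PowerSeries.X_pow_dvd_iff.1 hdvd d (Nat.lt_succ_of_le hdN)
  rw [map_sub, PowerSeries.coeff_one, sub_eq_zero] at hcoeff
  exact hcoeff.symm

end Stmt
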